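/- For every real parameter λ ≥ 1, the map ϱ̃^(λ) is admissible with the linear order ≤_ZX: for all α, β, γ ∈ Ĩ with α ≤_ZX β ≤_ZX γ, one has ϱ̃^(λ)(α, β) ≤ ϱ̃^(λ)(α, γ) and ϱ̃^(λ)(β, γ) ≤ ϱ̃^(λ)(α, γ). -/

import Mathlib

/-- The set of intuitionistic fuzzy values (IFVs). -/
def Itilde : Set (ℝ × ℝ) :=
  {p | 0 ≤ p.1 ∧ p.1 ≤ 1 ∧ 0 ≤ p.2 ∧ p.2 ≤ 1 ∧ p.1 + p.2 ≤ 1}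

/-- Accuracy degree `h(α) = μ_α + ν_α`. -/
def accuracy (p : ℝ × ℝ) : ℝ := p.1 + p.2

/-- The similarity function `L(α) = (1 - ν_α)/((1 - μ_α) + (1 - ν_α))`. -/
noncomputable def Lfun (p : ℝ × ℝ) : ℝ := (1 - p.2) / ((1 - p.1) + (1 - p.2))

/-- The Zhang–Xu linear order `≤_ZX`: `a ≤_ZX b` iff `L(a) < L(b)`, or
`L(a) = L(b)` and `h(a) ≤ h(b)`. -/
noncomputable def zxLE (a b : ℝ × ℝ) : Prop :=
  Lfun a < Lfun b ∨ (Lfun a = Lfun b ∧ accuracy a ≤ accuracy b)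

/-- The parametric distance measure `ϱ̃^(λ)`. -/
noncomputable def vrhoT (l : ℝ) (a b : ℝ × ℝ) : ℝ :=
  if Lfun a ≠ Lfun b then (1 + l * |Lfun a - Lfun b|) / (1 + l)
  else |accuracy a - accuracy b| / (1 + l)

/-!
Both branches of `ϱ̃^(λ)` are monotone in the gap they measure: the first in `|L(α) - L(β)|`, the
second in `|h(α) - h(β)|`. The second branch never exceeds the first, because accuracy degrees of
IFVs lie in `[0, 1]`, so `|h(α) - h(β)| ≤ 1 ≤ 1 + λ |L(γ) - L(δ)|`. For `α ≤_ZX β ≤_ZX γ` the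
`L`-values are monotone, so either `L(α) ≠ L(γ)` and the outer gap in `L` dominates both inner
ones, or all three `L`-values coincide and the accuracies are monotone.
-/

open Set

lemma abs_sub_le_abs_sub_of_le_of_le {α : Type*} [AddCommGroup α] [LinearOrder α]
    [IsOrderedAddMonoid α] {x y z : α} (hxy : x ≤ y) (hyz : y ≤ z) :
    |x - y| ≤ |x - z| ∧ |y - z| ≤ |x - z| := by
  have hy : y ∈ uIcc x z := mem_uIcc_of_le hxy hyz
  constructor
  · simpa only [abs_sub_comm x] using abs_sub_left_of_mem_uIcc hy
  · simpa only [abs_sub_comm _ z] using abs_sub_right_of_mem_uIcc hy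

lemma accuracy_mem_Icc {p : ℝ × ℝ} (hp : p ∈ Itilde) : accuracy p ∈ Icc 0 1 := by
  obtain ⟨hμ₀, -, hν₀, -, hsum⟩ := hp
  exact ⟨add_nonneg hμ₀ hν₀, hsum⟩

lemma abs_accuracy_sub_le_one {p q : ℝ × ℝ} (hp : p ∈ Itilde) (hq : q ∈ Itilde) :
    |accuracy p - accuracy q| ≤ 1 :=
  abs_sub_le_of_nonneg_of_le (accuracy_mem_Icc hp).1 (accuracy_mem_Icc hp).2
    (accuracy_mem_Icc hq).1 (accuracy_mem_Icc hq).2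

lemma Lfun_le_of_zxLE {a b : ℝ × ℝ} (h : zxLE a b) : Lfun a ≤ Lfun b :=
  h.elim le_of_lt fun h => h.1.le

lemma accuracy_le_of_zxLE_of_Lfun_eq {a b : ℝ × ℝ} (h : zxLE a b) (hL : Lfun a = Lfun b) :
    accuracy a ≤ accuracy b :=
  h.elim (fun h => absurd hL h.ne) And.right

lemma vrhoT_of_Lfun_ne (l : ℝ) {a b : ℝ × ℝ} (h : Lfun a ≠ Lfun b) :
    vrhoT l a b = (1 + l * |Lfun a - Lfun b|) / (1 + l) :=
  if_pos h

lemma vrhoT_of_Lfun_eq (l : ℝ) {a b : ℝ × ℝ} (h : Lfun a = Lfun b) :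
    vrhoT l a b = |accuracy a - accuracy b| / (1 + l) :=
  if_neg (not_not.mpr h)

lemma vrhoT_le_of_Lfun_ne {l : ℝ} (hl : 0 ≤ l) {p q r s : ℝ × ℝ} (hp : p ∈ Itilde)
    (hq : q ∈ Itilde) (hrs : Lfun r ≠ Lfun s) (hgap : |Lfun p - Lfun q| ≤ |Lfun r - Lfun s|) :
    vrhoT l p q ≤ vrhoT l r s := by
  rw [vrhoT_of_Lfun_ne l hrs]
  by_cases hpq : Lfun p = Lfun q
  · rw [vrhoT_of_Lfun_eq l hpq]
    refine div_le_div_of_nonneg_right ?_ (by positivity)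
    calc |accuracy p - accuracy q| ≤ 1 := abs_accuracy_sub_le_one hp hq
      _ ≤ 1 + l * |Lfun r - Lfun s| := le_add_of_nonneg_right (by positivity)
  · rw [vrhoT_of_Lfun_ne l hpq]
    gcongr

lemma vrhoT_le_of_Lfun_eq {l : ℝ} (hl : 0 ≤ l) {p q r s : ℝ × ℝ} (hpq : Lfun p = Lfun q)
    (hrs : Lfun r = Lfun s) (hgap : |accuracy p - accuracy q| ≤ |accuracy r - accuracy s|) :
    vrhoT l p q ≤ vrhoT l r s := by
  rw [vrhoT_of_Lfun_eq l hpq, vrhoT_of_Lfun_eq l hrs]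
  exact div_le_div_of_nonneg_right hgap (by positivity)

/-- For `l ≥ 1`, `ϱ̃ᶫ` is admissible with `≤_ZX`. -/
theorem vrhoT_admissible_zx (l : ℝ) (hl : 1 ≤ l) (a b c : ℝ × ℝ)
    (ha : a ∈ Itilde) (hb : b ∈ Itilde) (hc : c ∈ Itilde)
    (hab : zxLE a b) (hbc : zxLE b c) :
    vrhoT l a b ≤ vrhoT l a c ∧ vrhoT l b c ≤ vrhoT l a c := by
  have hl₀ : 0 ≤ l := by linarith
  by_cases hac : Lfun a = Lfun c
  · have hab' : Lfun a = Lfun b := le_antisymm (Lfun_le_of_zxLE hab) (hac ▸ Lfun_le_of_zxLE hbc)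
    have hbc' : Lfun b = Lfun c := hab'.symm.trans hac
    obtain ⟨hgap_ab, hgap_bc⟩ := abs_sub_le_abs_sub_of_le_of_le
      (accuracy_le_of_zxLE_of_Lfun_eq hab hab') (accuracy_le_of_zxLE_of_Lfun_eq hbc hbc')
    exact ⟨vrhoT_le_of_Lfun_eq hl₀ hab' hac hgap_ab, vrhoT_le_of_Lfun_eq hl₀ hbc' hac hgap_bc⟩
  · obtain ⟨hgap_ab, hgap_bc⟩ :=
      abs_sub_le_abs_sub_of_le_of_le (Lfun_le_of_zxLE hab) (Lfun_le_of_zxLE hbc)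
    exact ⟨vrhoT_le_of_Lfun_ne hl₀ ha hb hac hgap_ab, vrhoT_le_of_Lfun_ne hl₀ hb hc hac hgap_bc⟩
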